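/- For each λ > 0 let N_λ be Poisson with parameter λ, Z_λ the maximum of N_λ i.i.d. uniform random variables on [0, λ] independent of N_λ (Z_λ = 0 when N_λ = 0), and ξ_λ := (1 + 1/N_λ) Z_λ when N_λ > 0, ξ_λ := 0 when N_λ = 0. Then there exists λ₀ > 0 such that for all λ ≥ λ₀ and every integer ℓ ≥ 2, E( |ξ_λ − E(ξ_λ)|^ℓ ) ≤ 6^ℓ · ℓ!. -/

import Mathlib

open MeasureTheory ProbabilityTheory Filter Set

/-- `Zmax N U ω` is the maximum of `U_1 ω, …, U_{N ω} ω`, with the convention that it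
equals `0` when `N ω = 0`. -/
noncomputable def Zmax {Ω : Type*} (N : Ω → ℕ) (U : ℕ → Ω → ℝ) (ω : Ω) : ℝ :=
  if h : (Finset.Icc 1 (N ω)).Nonempty then (Finset.Icc 1 (N ω)).sup' h fun i => U i ω
  else 0

namespace Stmt12

lemma tsum_pow_div_fact (x : ℝ) : ∑' n : ℕ, x ^ n / (n.factorial : ℝ) = Real.exp x := by
  rw [Real.exp_eq_exp_ℝ, NormedSpace.exp_eq_tsum_div]

lemma summable_pdf (x : ℝ) : Summable (fun n : ℕ => x ^ n / (n.factorial : ℝ)) :=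
  Real.summable_pow_div_factorial x

variable {Ω : Type*} [MeasurableSpace Ω] {P : Measure Ω} [IsProbabilityMeasure P]
  {l : ℝ} {N : Ω → ℕ} {U : ℕ → Ω → ℝ}

lemma measurable_Zmax (hN : Measurable N) (hU : ∀ i, Measurable (U i)) :
    Measurable (Zmax N U) := by
  have h : Measurable fun p : Ω × ℕ =>
      (if h : (Finset.Icc 1 p.2).Nonempty then (Finset.Icc 1 p.2).sup' h (fun i => U i p.1)
        else 0) := by
    apply measurable_from_prod_countable_left
    intro n
    by_cases h : (Finset.Icc 1 n).Nonempty
    · simp only [h, dif_pos]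
      have := Finset.measurable_sup' h (f := fun i => U i) (fun i _ => hU i)
      convert this using 1
      ext ω
      simp [Finset.sup'_apply]
    · simp only [h, dif_neg, not_false_iff]
      exact measurable_const
  exact h.comp (measurable_id.prodMk hN)

lemma U_cdf (hl : 0 < l) (hU : ∀ i, Measurable (U i))
    (hUlaw : ∀ i, P.map (U i) = ENNReal.ofReal (1 / l) • volume.restrict (Set.Icc 0 l))
    (i : ℕ) {t : ℝ} (ht0 : 0 ≤ t) (htl : t ≤ l) :
    P (U i ⁻¹' Set.Iic t) = ENNReal.ofReal (t / l) := by
  rw [← Measure.map_apply (hU i) measurableSet_Iic, hUlaw i]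
  have h2 : Set.Iic t ∩ Set.Icc 0 l = Set.Icc 0 t := by
    ext x
    simp only [Set.mem_inter_iff, Set.mem_Iic, Set.mem_Icc]
    exact ⟨fun ⟨h, h0, _⟩ => ⟨h0, h⟩, fun ⟨h0, h⟩ => ⟨h, h0, h.trans htl⟩⟩
  rw [Measure.smul_apply, Measure.restrict_apply measurableSet_Iic, h2, Real.volume_Icc,
    sub_zero, smul_eq_mul, ← ENNReal.ofReal_mul (by positivity)]
  congr 1
  field_simp

lemma U_mem_ae (hl : 0 < l) (hU : ∀ i, Measurable (U i))
    (hUlaw : ∀ i, P.map (U i) = ENNReal.ofReal (1 / l) • volume.restrict (Set.Icc 0 l)) :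
    ∀ᵐ ω ∂P, ∀ i, U i ω ∈ Set.Icc (0:ℝ) l := by
  rw [ae_all_iff]
  intro i
  have h1 : P (U i ⁻¹' Set.Icc 0 l) = 1 := by
    rw [← Measure.map_apply (hU i) measurableSet_Icc, hUlaw i, Measure.smul_apply,
      Measure.restrict_apply measurableSet_Icc, Set.inter_self, Real.volume_Icc, sub_zero,
      smul_eq_mul, ← ENNReal.ofReal_mul (by positivity), one_div,
      inv_mul_cancel₀ hl.ne', ENNReal.ofReal_one]
  have h2 := (prob_compl_eq_zero_iff ((hU i) measurableSet_Icc)).2 h1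
  rw [ae_iff]
  have h3 : {ω | ¬ U i ω ∈ Set.Icc (0:ℝ) l} = (U i ⁻¹' Set.Icc 0 l)ᶜ := by
    ext ω; simp
  rw [h3]; exact h2

lemma Z_mem_ae (hl : 0 < l) (hU : ∀ i, Measurable (U i))
    (hUlaw : ∀ i, P.map (U i) = ENNReal.ofReal (1 / l) • volume.restrict (Set.Icc 0 l)) :
    ∀ᵐ ω ∂P, Zmax N U ω ∈ Set.Icc (0:ℝ) l := by
  filter_upwards [U_mem_ae hl hU hUlaw] with ω hω
  unfold Zmax
  split_ifs with h
  · obtain ⟨i, hi⟩ := h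
    exact ⟨le_trans (hω i).1 (Finset.le_sup' (fun j => U j ω) hi), Finset.sup'_le _ _ fun j _ => (hω j).2⟩
  · exact ⟨le_refl 0, hl.le⟩

end Stmt12
section Part2
set_option linter.unusedSectionVars false
namespace Stmt12
variable {Ω : Type*} [MeasurableSpace Ω] {P : Measure Ω} [IsProbabilityMeasure P]
  {l : ℝ} {N : Ω → ℕ} {U : ℕ → Ω → ℝ}

lemma joint_cdf (hl : 0 < l) (hN : Measurable N) (hU : ∀ i, Measurable (U i))
    (hNlaw : ∀ q : ℕ, P {ω | N ω = q} = ENNReal.ofReal (Real.exp (-l) * l ^ q / q.factorial))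
    (hUlaw : ∀ i, P.map (U i) = ENNReal.ofReal (1 / l) • volume.restrict (Set.Icc 0 l))
    (hind : iIndepFun (β := fun o : Option ℕ => Option.rec ℕ (fun _ => ℝ) o)
      (m := fun o => Option.rec (motive := fun o => MeasurableSpace (Option.rec ℕ (fun _ => ℝ) o))
        (inferInstanceAs (MeasurableSpace ℕ)) (fun _ => inferInstanceAs (MeasurableSpace ℝ)) o)
      (fun o => Option.rec (motive := fun o => Ω → Option.rec ℕ (fun _ => ℝ) o)
        N (fun i => U i) o) P)
    (n : ℕ) {t : ℝ} (ht0 : 0 ≤ t) (htl : t ≤ l) :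
    P ({ω | N ω = n} ∩ ⋂ i ∈ Finset.Icc 1 n, U i ⁻¹' Set.Iic t)
      = ENNReal.ofReal (Real.exp (-l) * l ^ n / n.factorial) * ENNReal.ofReal (t / l) ^ n := by
  classical
  have hnone : (none : Option ℕ) ∉ (Finset.Icc 1 n).image some := by simp
  have key := hind.measure_inter_preimage_eq_mul
    (S := insert none ((Finset.Icc 1 n).image some))
    (sets := fun o => Option.rec (motive := fun o => Set (Option.rec ℕ (fun _ => ℝ) o))
       ({n} : Set ℕ) (fun _ => Set.Iic t) o) ?_
  · rw [Finset.set_biInter_insert, Finset.set_biInter_finset_image,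
      Finset.prod_insert hnone, Finset.prod_image (fun x _ y _ h => Option.some.inj h)] at key
    have hfac : ∀ i ∈ Finset.Icc 1 n,
        P ((fun ω => U i ω) ⁻¹' Set.Iic t) = ENNReal.ofReal (t / l) := fun i _ =>
      U_cdf hl hU hUlaw i ht0 htl
    rw [Finset.prod_congr rfl hfac, Finset.prod_const, Nat.card_Icc] at key
    rw [show P (N ⁻¹' {n}) = ENNReal.ofReal (Real.exp (-l) * l ^ n / n.factorial)
      from hNlaw n] at key
    exact key
  · intro o ho
    match o with
    | none => exact MeasurableSet.singleton n
    | some i => exact measurableSet_Iic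

lemma setZ_eq (n : ℕ) {t : ℝ} (ht0 : 0 ≤ t) :
    {ω | N ω = n} ∩ {ω | Zmax N U ω ≤ t}
      = {ω | N ω = n} ∩ ⋂ i ∈ Finset.Icc 1 n, U i ⁻¹' Set.Iic t := by
  ext ω
  simp only [Set.mem_inter_iff, Set.mem_setOf_eq, Set.mem_iInter, Set.mem_preimage, Set.mem_Iic]
  constructor
  · rintro ⟨hn, hZ⟩
    refine ⟨hn, fun i hi => ?_⟩
    unfold Zmax at hZ
    rw [hn] at hZ
    have hne : (Finset.Icc 1 n).Nonempty := ⟨i, hi⟩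
    rw [dif_pos hne] at hZ
    exact le_trans (Finset.le_sup' (fun j => U j ω) hi) hZ
  · rintro ⟨hn, hi⟩
    refine ⟨hn, ?_⟩
    unfold Zmax
    rw [hn]
    split_ifs with h
    · exact Finset.sup'_le h _ fun j hj => hi j hj
    · exact ht0

lemma jointZ (hl : 0 < l) (hN : Measurable N) (hU : ∀ i, Measurable (U i))
    (hNlaw : ∀ q : ℕ, P {ω | N ω = q} = ENNReal.ofReal (Real.exp (-l) * l ^ q / q.factorial))
    (hUlaw : ∀ i, P.map (U i) = ENNReal.ofReal (1 / l) • volume.restrict (Set.Icc 0 l))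
    (hind : iIndepFun (β := fun o : Option ℕ => Option.rec ℕ (fun _ => ℝ) o)
      (m := fun o => Option.rec (motive := fun o => MeasurableSpace (Option.rec ℕ (fun _ => ℝ) o))
        (inferInstanceAs (MeasurableSpace ℕ)) (fun _ => inferInstanceAs (MeasurableSpace ℝ)) o)
      (fun o => Option.rec (motive := fun o => Ω → Option.rec ℕ (fun _ => ℝ) o)
        N (fun i => U i) o) P)
    (n : ℕ) {t : ℝ} (ht0 : 0 ≤ t) (htl : t ≤ l) :
    P ({ω | N ω = n} ∩ {ω | Zmax N U ω ≤ t})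
      = ENNReal.ofReal (Real.exp (-l) * l ^ n / n.factorial * (t / l) ^ n) := by
  rw [setZ_eq n ht0, joint_cdf hl hN hU hNlaw hUlaw hind n ht0 htl,
    ← ENNReal.ofReal_pow (by positivity), ← ENNReal.ofReal_mul (by positivity)]

lemma cdfZ (hl : 0 < l) (hN : Measurable N) (hU : ∀ i, Measurable (U i))
    (hNlaw : ∀ q : ℕ, P {ω | N ω = q} = ENNReal.ofReal (Real.exp (-l) * l ^ q / q.factorial))
    (hUlaw : ∀ i, P.map (U i) = ENNReal.ofReal (1 / l) • volume.restrict (Set.Icc 0 l))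
    (hind : iIndepFun (β := fun o : Option ℕ => Option.rec ℕ (fun _ => ℝ) o)
      (m := fun o => Option.rec (motive := fun o => MeasurableSpace (Option.rec ℕ (fun _ => ℝ) o))
        (inferInstanceAs (MeasurableSpace ℕ)) (fun _ => inferInstanceAs (MeasurableSpace ℝ)) o)
      (fun o => Option.rec (motive := fun o => Ω → Option.rec ℕ (fun _ => ℝ) o)
        N (fun i => U i) o) P)
    {t : ℝ} (ht0 : 0 ≤ t) (htl : t ≤ l) :
    P {ω | Zmax N U ω ≤ t} = ENNReal.ofReal (Real.exp (t - l)) := by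
  have hcover : {ω | Zmax N U ω ≤ t}
      = ⋃ n, ({ω | N ω = n} ∩ {ω | Zmax N U ω ≤ t}) := by
    ext ω; simp
  rw [hcover, measure_iUnion ?_ ?_]
  · have hterm : ∀ n : ℕ, P ({ω | N ω = n} ∩ {ω | Zmax N U ω ≤ t})
        = ENNReal.ofReal (Real.exp (-l) * (t ^ n / n.factorial)) := by
      intro n
      rw [jointZ hl hN hU hNlaw hUlaw hind n ht0 htl]
      congr 1
      rw [div_pow]
      field_simp
    simp_rw [hterm]
    rw [← ENNReal.ofReal_tsum_of_nonneg (fun n => by positivity)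
      ((summable_pdf t).mul_left _)]
    congr 1
    rw [tsum_mul_left, tsum_pow_div_fact, ← Real.exp_add]
    ring_nf
  · intro m k hmk
    refine Set.disjoint_left.2 fun ω h1 h2 => hmk ?_
    exact h1.1.symm.trans h2.1
  · intro n
    exact (hN (MeasurableSet.singleton n)).inter
      ((measurable_Zmax hN hU) measurableSet_Iic)

end Stmt12
end Part2
section Part3
set_option linter.unusedSectionVars false
set_option maxHeartbeats 1000000
namespace Stmt12
variable {Ω : Type*} [MeasurableSpace Ω] {P : Measure Ω} [IsProbabilityMeasure P]
  {l : ℝ} {N : Ω → ℕ} {U : ℕ → Ω → ℝ}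

lemma integrable_bdd {f : Ω → ℝ} (hf : Measurable f) {C : ℝ} (h : ∀ᵐ ω ∂P, |f ω| ≤ C) :
    Integrable f P :=
  (integrable_const C).mono' hf.aestronglyMeasurable (by simpa [Real.norm_eq_abs] using h)

lemma tailZ (hl : 0 < l) (hN : Measurable N) (hU : ∀ i, Measurable (U i))
    (hNlaw : ∀ q : ℕ, P {ω | N ω = q} = ENNReal.ofReal (Real.exp (-l) * l ^ q / q.factorial))
    (hUlaw : ∀ i, P.map (U i) = ENNReal.ofReal (1 / l) • volume.restrict (Set.Icc 0 l))
    (hind : iIndepFun (β := fun o : Option ℕ => Option.rec ℕ (fun _ => ℝ) o)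
      (m := fun o => Option.rec (motive := fun o => MeasurableSpace (Option.rec ℕ (fun _ => ℝ) o))
        (inferInstanceAs (MeasurableSpace ℕ)) (fun _ => inferInstanceAs (MeasurableSpace ℝ)) o)
      (fun o => Option.rec (motive := fun o => Ω → Option.rec ℕ (fun _ => ℝ) o)
        N (fun i => U i) o) P)
    {t : ℝ} (ht : 0 < t) :
    P {ω | t < l - Zmax N U ω} ≤ ENNReal.ofReal (Real.exp (-t)) := by
  by_cases htl : t < l
  · have hsub : {ω | t < l - Zmax N U ω} ⊆ {ω | Zmax N U ω ≤ l - t} := by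
      intro ω h
      simp only [Set.mem_setOf_eq] at h ⊢
      linarith
    refine le_trans (measure_mono hsub) ?_
    rw [cdfZ hl hN hU hNlaw hUlaw hind (by linarith) (by linarith)]
    rw [show l - t - l = -t by ring]
  · have hnull : P {ω | t < l - Zmax N U ω} = 0 := by
      refine measure_mono_null (fun ω h => ?_) (ae_iff.1 (Z_mem_ae hl hU hUlaw (N := N)))
      simp only [Set.mem_setOf_eq] at h ⊢
      intro hmem
      have h1 := hmem.1
      have h2 := not_lt.1 htl
      linarith
    rw [hnull]
    exact zero_le

lemma momY (hl : 0 < l) (hN : Measurable N) (hU : ∀ i, Measurable (U i))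
    (hNlaw : ∀ q : ℕ, P {ω | N ω = q} = ENNReal.ofReal (Real.exp (-l) * l ^ q / q.factorial))
    (hUlaw : ∀ i, P.map (U i) = ENNReal.ofReal (1 / l) • volume.restrict (Set.Icc 0 l))
    (hind : iIndepFun (β := fun o : Option ℕ => Option.rec ℕ (fun _ => ℝ) o)
      (m := fun o => Option.rec (motive := fun o => MeasurableSpace (Option.rec ℕ (fun _ => ℝ) o))
        (inferInstanceAs (MeasurableSpace ℕ)) (fun _ => inferInstanceAs (MeasurableSpace ℝ)) o)
      (fun o => Option.rec (motive := fun o => Ω → Option.rec ℕ (fun _ => ℝ) o)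
        N (fun i => U i) o) P)
    (j : ℕ) (hj : 1 ≤ j) :
    ∫ ω, (l - Zmax N U ω) ^ j ∂P ≤ (j.factorial : ℝ) := by
  have hZm := measurable_Zmax hN hU
  set Y : Ω → ℝ := fun ω => l - Zmax N U ω with hYdef
  have hYm : Measurable Y := measurable_const.sub hZm
  have hZae := Z_mem_ae hl hU hUlaw (N := N)
  have hY0 : 0 ≤ᵐ[P] Y := hZae.mono fun ω h => sub_nonneg.2 h.2
  have hjR : (0:ℝ) < (j:ℝ) := by exact_mod_cast hj
  have g_intble : ∀ t > (0:ℝ), IntervalIntegrable (fun s => (j:ℝ) * s ^ (j-1)) volume 0 t :=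
    fun t _ => (continuous_const.mul (continuous_pow _)).intervalIntegrable 0 t
  have g_nn : ∀ᵐ s ∂(volume.restrict (Set.Ioi (0:ℝ))), 0 ≤ (j:ℝ) * s ^ (j-1) := by
    rw [ae_restrict_iff' measurableSet_Ioi]
    refine Filter.Eventually.of_forall fun s hs => ?_
    have hs' : (0:ℝ) < s := hs
    positivity
  have key := lintegral_comp_eq_lintegral_meas_lt_mul P hY0 hYm.aemeasurable g_intble g_nn
  have hLHS : ∫⁻ ω, ENNReal.ofReal (∫ s in (0:ℝ)..Y ω, (j:ℝ) * s ^ (j-1)) ∂P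
      = ∫⁻ ω, ENNReal.ofReal (Y ω ^ j) ∂P := by
    refine lintegral_congr fun ω => ?_
    congr 1
    have h1 : j - 1 + 1 = j := by omega
    have h2 : ((j - 1 : ℕ) : ℝ) + 1 = (j : ℝ) := by
      push_cast [Nat.cast_sub hj]
      ring
    rw [intervalIntegral.integral_const_mul, integral_pow, h1, h2,
      zero_pow (by omega : j ≠ 0), sub_zero]
    field_simp
  -- the integrand on the right-hand side
  have hcongr : ∀ s ∈ Set.Ioi (0:ℝ), (j:ℝ) * ((Real.exp (-s) * s ^ ((j:ℝ) - 1)))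
      = (j:ℝ) * s ^ (j-1) * Real.exp (-s) := by
    intro s hs
    have hcast : ((j:ℝ) - 1) = ((j - 1 : ℕ) : ℝ) := by
      push_cast [Nat.cast_sub hj]
      ring
    rw [hcast, Real.rpow_natCast]
    ring
  have hInt : IntegrableOn (fun s : ℝ => (j:ℝ) * s ^ (j-1) * Real.exp (-s)) (Set.Ioi 0) := by
    exact IntegrableOn.congr_fun ((Real.GammaIntegral_convergent hjR).const_mul (j:ℝ))
      hcongr measurableSet_Ioi
  have hGamma : ∫ s in Set.Ioi (0:ℝ), (j:ℝ) * s ^ (j-1) * Real.exp (-s)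
      = (j.factorial : ℝ) := by
    rw [← setIntegral_congr_fun measurableSet_Ioi hcongr, integral_const_mul,
      ← Real.Gamma_eq_integral hjR]
    have hG : Real.Gamma (j:ℝ) = ((j-1).factorial : ℝ) := by
      have h0 := Real.Gamma_nat_eq_factorial (j-1)
      rwa [show ((j - 1 : ℕ) : ℝ) + 1 = (j:ℝ) by push_cast [Nat.cast_sub hj]; ring] at h0
    rw [hG, ← Nat.mul_factorial_pred (by omega : j ≠ 0)]
    push_cast
    ring
  have hRHS : ∫⁻ s in Set.Ioi (0:ℝ), P {a | s < Y a} * ENNReal.ofReal ((j:ℝ) * s ^ (j-1))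
      ≤ ENNReal.ofReal (j.factorial : ℝ) := by
    have step1 : ∫⁻ s in Set.Ioi (0:ℝ), P {a | s < Y a} * ENNReal.ofReal ((j:ℝ) * s ^ (j-1))
        ≤ ∫⁻ s in Set.Ioi (0:ℝ), ENNReal.ofReal ((j:ℝ) * s ^ (j-1) * Real.exp (-s)) := by
      refine lintegral_mono_ae ?_
      rw [ae_restrict_iff' measurableSet_Ioi]
      refine Filter.Eventually.of_forall fun s hs => ?_
      have htail := tailZ hl hN hU hNlaw hUlaw hind (hs : (0:ℝ) < s)
      calc P {a | s < Y a} * ENNReal.ofReal ((j:ℝ) * s ^ (j-1))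
          ≤ ENNReal.ofReal (Real.exp (-s)) * ENNReal.ofReal ((j:ℝ) * s ^ (j-1)) :=
            mul_le_mul_left htail _
        _ = ENNReal.ofReal ((j:ℝ) * s ^ (j-1) * Real.exp (-s)) := by
            rw [← ENNReal.ofReal_mul (Real.exp_nonneg _), mul_comm]
    refine le_trans step1 ?_
    rw [← ofReal_integral_eq_lintegral_ofReal hInt ?_]
    · rw [hGamma]
    · rw [EventuallyLE, ae_restrict_iff' measurableSet_Ioi]
      refine Filter.Eventually.of_forall fun s hs => ?_
      have : (0:ℝ) < s := hs
      positivity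
  have hEeq : ∫ ω, Y ω ^ j ∂P = (∫⁻ ω, ENNReal.ofReal (Y ω ^ j) ∂P).toReal := by
    rw [integral_eq_lintegral_of_nonneg_ae (hY0.mono fun ω h => pow_nonneg h j)
      (hYm.pow_const j).aestronglyMeasurable]
  show ∫ ω, Y ω ^ j ∂P ≤ (j.factorial : ℝ)
  rw [hEeq]
  refine ENNReal.toReal_le_of_le_ofReal (by positivity) ?_
  rw [← hLHS, key]
  exact hRHS

end Stmt12
end Part3
section Part4
set_option linter.unusedSectionVars false
set_option maxHeartbeats 1000000
namespace Stmt12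
variable {Ω : Type*} [MeasurableSpace Ω] {P : Measure Ω} [IsProbabilityMeasure P]
  {l : ℝ} {N : Ω → ℕ} {U : ℕ → Ω → ℝ}

lemma measurableSet_Neq (hN : Measurable N) (n : ℕ) : MeasurableSet {ω | N ω = n} :=
  hN (MeasurableSet.singleton n)

lemma measurableSet_Zle (hZm : Measurable (Zmax N U)) (t : ℝ) :
    MeasurableSet {ω | Zmax N U ω ≤ t} :=
  hZm measurableSet_Iic

lemma integral_partition (hN : Measurable N) {f : Ω → ℝ} (hf : Integrable f P) :
    ∫ ω, f ω ∂P = ∑' n, ∫ ω in {ω | N ω = n}, f ω ∂P := by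
  have hUn : (⋃ n, {ω | N ω = n}) = Set.univ := by ext ω; simp
  have h := integral_iUnion (μ := P) (s := fun n => {ω | N ω = n})
    (fun n => hN (MeasurableSet.singleton n))
    (fun m k hmk => Set.disjoint_left.2 fun ω h1 h2 => hmk (h1.symm.trans h2))
    (by rw [hUn]; exact hf.integrableOn)
  rwa [hUn, Measure.restrict_univ] at h

lemma intWn (hl : 0 < l) (hN : Measurable N) (hU : ∀ i, Measurable (U i))
    (hNlaw : ∀ q : ℕ, P {ω | N ω = q} = ENNReal.ofReal (Real.exp (-l) * l ^ q / q.factorial))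
    (hUlaw : ∀ i, P.map (U i) = ENNReal.ofReal (1 / l) • volume.restrict (Set.Icc 0 l))
    (hind : iIndepFun (β := fun o : Option ℕ => Option.rec ℕ (fun _ => ℝ) o)
      (m := fun o => Option.rec (motive := fun o => MeasurableSpace (Option.rec ℕ (fun _ => ℝ) o))
        (inferInstanceAs (MeasurableSpace ℕ)) (fun _ => inferInstanceAs (MeasurableSpace ℝ)) o)
      (fun o => Option.rec (motive := fun o => Ω → Option.rec ℕ (fun _ => ℝ) o)
        N (fun i => U i) o) P)
    (n : ℕ) (hn : 1 ≤ n) :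
    ∫ ω, (if N ω = n then Zmax N U ω else 0) ∂P
      = Real.exp (-l) * l ^ n / n.factorial * (l * n / (n+1)) := by
  have hZm := measurable_Zmax hN hU
  have hZae := Z_mem_ae hl hU hUlaw (N := N)
  set W : Ω → ℝ := fun ω => if N ω = n then Zmax N U ω else 0 with hWdef
  have hWm : Measurable W := Measurable.ite (hN (MeasurableSet.singleton n)) hZm measurable_const
  have hW0 : 0 ≤ᵐ[P] W := hZae.mono fun ω h => by
    simp only [hWdef]
    split_ifs
    exacts [h.1, le_refl 0]
  have hWint : Integrable W P := integrable_bdd hWm (hZae.mono fun ω h => by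
    simp only [hWdef]
    split_ifs
    · rw [abs_of_nonneg h.1]; exact h.2
    · simpa using hl.le)
  rw [hWint.integral_eq_integral_meas_lt hW0]
  have hpow_le : ∀ t : ℝ, 0 ≤ t → t ≤ l → (t/l)^n ≤ 1 := fun t h0 h1 =>
    pow_le_one₀ (by positivity) (by rw [div_le_one hl]; exact h1)
  have hpt : ∀ t ∈ Set.Ioi (0:ℝ), (P {a | t < W a}).toReal
      = Set.indicator (Set.Ioc 0 l)
          (fun t => Real.exp (-l) * l ^ n / n.factorial * (1 - (t/l)^n)) t := by
    intro t ht
    have ht0 : (0:ℝ) < t := ht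
    by_cases htl : t ≤ l
    · have hset : {a | t < W a}
          = {ω | N ω = n} \ ({ω | N ω = n} ∩ {ω | Zmax N U ω ≤ t}) := by
        ext ω
        simp only [hWdef, Set.mem_setOf_eq, Set.mem_diff, Set.mem_inter_iff]
        constructor
        · intro h
          by_cases hNn : N ω = n
          · rw [if_pos hNn] at h
            exact ⟨hNn, fun hc => absurd h (not_lt.2 hc.2)⟩
          · rw [if_neg hNn] at h
            exact absurd h (not_lt.2 ht0.le)
        · rintro ⟨hNn, hc⟩
          rw [if_pos hNn]
          by_contra hle
          exact hc ⟨hNn, not_lt.1 hle⟩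
      rw [hset, measure_diff Set.inter_subset_left
        (((measurableSet_Neq hN n).inter
          (measurableSet_Zle hZm t)).nullMeasurableSet)
        (measure_ne_top _ _)]
      rw [hNlaw n, jointZ hl hN hU hNlaw hUlaw hind n ht0.le htl,
        ← ENNReal.ofReal_sub _ (by positivity)]
      have hnn : 0 ≤ Real.exp (-l) * l ^ n / n.factorial
          - Real.exp (-l) * l ^ n / n.factorial * (t/l)^n := by
        have h1 := hpow_le t ht0.le htl
        have h2 : (0:ℝ) ≤ Real.exp (-l) * l ^ n / n.factorial := by positivity
        nlinarith
      rw [ENNReal.toReal_ofReal hnn, Set.indicator_of_mem (show t ∈ Set.Ioc 0 l from ⟨ht0, htl⟩)]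
      ring
    · have hz : P {a | t < W a} = 0 := by
        refine measure_mono_null (fun ω h => ?_) (ae_iff.1 hZae)
        simp only [hWdef, Set.mem_setOf_eq] at h ⊢
        intro hmem
        split_ifs at h
        · linarith [hmem.2, not_le.1 htl]
        · linarith
      rw [hz, Set.indicator_of_notMem (fun hc => htl hc.2)]
      simp
  simp only [measureReal_def]
  rw [setIntegral_congr_fun measurableSet_Ioi hpt,
    setIntegral_indicator measurableSet_Ioc,
    Set.inter_eq_self_of_subset_right Set.Ioc_subset_Ioi_self,
    ← intervalIntegral.integral_of_le hl.le,
    intervalIntegral.integral_const_mul]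
  have hsplit : ∫ t in (0:ℝ)..l, (1 - (t/l)^n)
      = l - (l^(n+1) - 0^(n+1))/((n:ℝ)+1)/l^n := by
    have h1 : ∀ t : ℝ, (1 - (t/l)^n) = 1 - t^n / l^n := by
      intro t; rw [div_pow]
    simp_rw [h1]
    rw [intervalIntegral.integral_sub intervalIntegrable_const
      ((intervalIntegral.intervalIntegrable_pow n).div_const _),
      intervalIntegral.integral_div, integral_pow]
    simp
  rw [hsplit, zero_pow (by omega : n + 1 ≠ 0), sub_zero]
  have hne : ((n:ℝ)+1) ≠ 0 := by positivity
  field_simp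
  ring

lemma integral_xi (hl : 0 < l) (hN : Measurable N) (hU : ∀ i, Measurable (U i))
    (hNlaw : ∀ q : ℕ, P {ω | N ω = q} = ENNReal.ofReal (Real.exp (-l) * l ^ q / q.factorial))
    (hUlaw : ∀ i, P.map (U i) = ENNReal.ofReal (1 / l) • volume.restrict (Set.Icc 0 l))
    (hind : iIndepFun (β := fun o : Option ℕ => Option.rec ℕ (fun _ => ℝ) o)
      (m := fun o => Option.rec (motive := fun o => MeasurableSpace (Option.rec ℕ (fun _ => ℝ) o))
        (inferInstanceAs (MeasurableSpace ℕ)) (fun _ => inferInstanceAs (MeasurableSpace ℝ)) o)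
      (fun o => Option.rec (motive := fun o => Ω → Option.rec ℕ (fun _ => ℝ) o)
        N (fun i => U i) o) P) :
    ∫ ω, (if N ω = 0 then (0:ℝ) else (1 + 1/(N ω : ℝ)) * Zmax N U ω) ∂P
      = l * (1 - Real.exp (-l)) := by
  have hZm := measurable_Zmax hN hU
  have hZae := Z_mem_ae hl hU hUlaw (N := N)
  set ξ : Ω → ℝ := fun ω => if N ω = 0 then (0:ℝ) else (1 + 1/(N ω : ℝ)) * Zmax N U ω
    with hxidef
  have hxim : Measurable ξ := by
    refine Measurable.ite (hN (MeasurableSet.singleton 0)) measurable_const ?_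
    exact ((measurable_from_top (f := fun n : ℕ => 1 + 1/(n:ℝ))).comp hN).mul hZm
  have hxiabs : ∀ᵐ ω ∂P, |ξ ω| ≤ 2*l := hZae.mono fun ω h => by
    simp only [hxidef]
    split_ifs with h0
    · rw [abs_zero]; linarith
    · have hn1 : 1 ≤ N ω := Nat.one_le_iff_ne_zero.2 h0
      have hc : (1:ℝ) ≤ (N ω : ℝ) := by exact_mod_cast hn1
      have hpos : 0 ≤ (1 + 1/(N ω:ℝ)) := by positivity
      rw [abs_of_nonneg (mul_nonneg hpos h.1)]
      have h2 : (1 + 1/(N ω:ℝ)) ≤ 2 := by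
        have h3 : 1/(N ω:ℝ) ≤ 1 := by
          rw [div_le_one (by linarith)]
          exact hc
        linarith
      calc (1 + 1/(N ω:ℝ)) * Zmax N U ω ≤ 2 * Zmax N U ω :=
            mul_le_mul_of_nonneg_right h2 h.1
        _ ≤ 2 * l := by linarith [h.2]
  have hxiint : Integrable ξ P := integrable_bdd hxim hxiabs
  rw [integral_partition hN hxiint]
  have hterm : ∀ n : ℕ, ∫ ω in {ω | N ω = n}, ξ ω ∂P
      = if n = 0 then 0 else Real.exp (-l) * l ^ n / n.factorial * l := by
    intro n
    by_cases hn : n = 0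
    · subst hn
      have hEq : Set.EqOn ξ (fun _ => (0:ℝ)) {ω | N ω = 0} := by
        intro ω hω
        have hω' : N ω = 0 := hω
        simp [hxidef, hω']
      rw [setIntegral_congr_fun (measurableSet_Neq hN 0) hEq, integral_zero, if_pos rfl]
    · rw [if_neg hn]
      have hn1 : 1 ≤ n := Nat.one_le_iff_ne_zero.2 hn
      have hEq : Set.EqOn ξ (fun ω => (1 + 1/(n:ℝ)) * Zmax N U ω) {ω | N ω = n} := by
        intro ω hω
        have hω' : N ω = n := hω
        simp [hxidef, hω', hn]
      rw [setIntegral_congr_fun (measurableSet_Neq hN n) hEq, integral_const_mul]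
      have hind2 : ∫ ω in {ω | N ω = n}, Zmax N U ω ∂P
          = ∫ ω, (if N ω = n then Zmax N U ω else 0) ∂P := by
        rw [← integral_indicator (measurableSet_Neq hN n)]
        congr 1
        funext ω
        simp [Set.indicator_apply]
      rw [hind2, intWn hl hN hU hNlaw hUlaw hind n hn1]
      have hcast : (0:ℝ) < (n:ℝ) := by exact_mod_cast hn1
      field_simp
  rw [tsum_congr hterm]
  -- evaluate the series
  have hgval : ∀ n : ℕ, Real.exp (-l) * l ^ n / n.factorial * l
      = (Real.exp (-l) * l) * (l ^ n / n.factorial) := fun n => by ring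
  have hgsummable : Summable (fun n : ℕ => Real.exp (-l) * l ^ n / n.factorial * l) := by
    simp_rw [hgval]
    exact (summable_pdf l).mul_left _
  have hgsum : ∑' n : ℕ, Real.exp (-l) * l ^ n / n.factorial * l = Real.exp (-l) * l * Real.exp l := by
    simp_rw [hgval]
    rw [tsum_mul_left, tsum_pow_div_fact]
  set f : ℕ → ℝ := fun n => if n = 0 then 0 else Real.exp (-l) * l ^ n / n.factorial * l
    with hfdef
  set h : ℕ → ℝ := fun n => if n = 0 then Real.exp (-l) * l ^ (0:ℕ) / (Nat.factorial 0) * l else 0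
    with hhdef
  have hfh : ∀ n, f n + h n = Real.exp (-l) * l ^ n / n.factorial * l := by
    intro n
    simp only [hfdef, hhdef]
    split_ifs with h0
    · subst h0; simp
    · simp
  have hgnonneg : ∀ n : ℕ, 0 ≤ Real.exp (-l) * l ^ n / n.factorial * l := by
    intro n; positivity
  have hfsummable : Summable f := by
    refine Summable.of_nonneg_of_le ?_ ?_ hgsummable
    · intro n
      simp only [hfdef]
      split_ifs
      · exact le_refl 0
      · positivity
    · intro n
      simp only [hfdef]
      split_ifs
      · exact hgnonneg n
      · exact le_refl _
  have hhsummable : Summable h := by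
    refine Summable.of_nonneg_of_le ?_ ?_ hgsummable
    · intro n
      simp only [hhdef]
      split_ifs
      · positivity
      · exact le_refl 0
    · intro n
      simp only [hhdef]
      split_ifs with h0
      · subst h0; exact le_refl _
      · exact hgnonneg n
  have hhsum : ∑' n, h n = Real.exp (-l) * l := by
    simp only [hhdef]
    rw [tsum_ite_eq]
    simp
  have hadd : ∑' n, f n + ∑' n, h n = Real.exp (-l) * l * Real.exp l := by
    rw [← Summable.tsum_add hfsummable hhsummable, ← hgsum]
    exact tsum_congr hfh
  have hexp : Real.exp (-l) * Real.exp l = 1 := by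
    rw [← Real.exp_add]
    simp
  rw [hhsum] at hadd
  have : ∑' n, f n = l - Real.exp (-l) * l := by nlinarith [hadd]
  rw [this]
  ring

end Stmt12
end Part4
section Part5
set_option linter.unusedSectionVars false
set_option maxHeartbeats 2000000
namespace Stmt12
variable {Ω : Type*} [MeasurableSpace Ω] {P : Measure Ω} [IsProbabilityMeasure P]
  {l : ℝ} {N : Ω → ℕ} {U : ℕ → Ω → ℝ}

lemma chernoff (hl : 0 < l) (hN : Measurable N)
    (hNlaw : ∀ q : ℕ, P {ω | N ω = q} = ENNReal.ofReal (Real.exp (-l) * l ^ q / q.factorial)) :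
    (P {ω | (N ω : ℝ) < 2*l/5}).toReal ≤ Real.exp (11*l/30 - 3*l/5) := by
  set c := Real.log (5/2) with hcdef
  have hc0 : 0 < c := Real.log_pos (by norm_num)
  have hcexp : Real.exp c = 5/2 := Real.exp_log (by norm_num)
  have hc1112 : c ≤ 11/12 := by
    rw [hcdef, Real.log_le_iff_le_exp (by norm_num)]
    have h1 : ((5:ℝ)/2)^(12:ℕ) ≤ (Real.exp (11/12))^(12:ℕ) := by
      have h2 : (Real.exp (11/12))^(12:ℕ) = Real.exp 1 ^ (11:ℕ) := by
        rw [← Real.exp_nat_mul, ← Real.exp_nat_mul]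
        norm_num
      rw [h2]
      calc ((5:ℝ)/2)^(12:ℕ) ≤ (2.7182818283:ℝ)^(11:ℕ) := by norm_num
        _ ≤ Real.exp 1 ^ (11:ℕ) :=
            pow_le_pow_left₀ (by norm_num) Real.exp_one_gt_d9.le 11
    exact le_of_pow_le_pow_left₀ (by norm_num) (Real.exp_nonneg _) h1
  set S := {ω | (N ω : ℝ) < 2*l/5} with hSdef
  have hSm : MeasurableSet S := measurableSet_lt (measurable_from_top.comp hN) measurable_const
  set hf : Ω → ℝ := fun ω => Real.exp (c * (2*l/5 - (N ω : ℝ))) with hfdef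
  have hfm : Measurable hf := by
    refine Real.measurable_exp.comp ?_
    exact measurable_const.mul (measurable_const.sub (measurable_from_top.comp hN))
  have hfint : Integrable hf P := by
    refine integrable_bdd hfm (C := Real.exp (c * (2*l/5)))
      (Filter.Eventually.of_forall fun ω => ?_)
    rw [abs_of_pos (Real.exp_pos _)]
    apply Real.exp_le_exp.2
    have h4 : (0:ℝ) ≤ (N ω : ℝ) := Nat.cast_nonneg _
    nlinarith
  have hle : ∀ ω, Set.indicator S (fun _ => (1:ℝ)) ω ≤ hf ω := fun ω => by
    by_cases hω : ω ∈ S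
    · rw [Set.indicator_of_mem hω]
      rw [show (1:ℝ) = Real.exp 0 by simp]
      apply Real.exp_le_exp.2
      have hω' : (N ω : ℝ) < 2*l/5 := hω
      nlinarith
    · rw [Set.indicator_of_notMem hω]
      exact (Real.exp_pos _).le
  have hmono : (P S).toReal ≤ ∫ ω, hf ω ∂P := by
    rw [← measureReal_def, ← integral_indicator_one hSm]
    exact integral_mono_ae ((integrable_const 1).indicator hSm) hfint
      (Filter.Eventually.of_forall hle)
  have hval : ∫ ω, hf ω ∂P
      = Real.exp (-l) * Real.exp (c*(2*l/5)) * Real.exp (2*l/5) := by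
    rw [integral_partition hN hfint]
    have hterm : ∀ n : ℕ, ∫ ω in {ω | N ω = n}, hf ω ∂P
        = (Real.exp (-l) * Real.exp (c*(2*l/5))) * ((2*l/5)^n / n.factorial) := by
      intro n
      have hEq : Set.EqOn hf (fun _ => Real.exp (c * (2*l/5 - (n:ℝ)))) {ω | N ω = n} := by
        intro ω hω
        have hω' : N ω = n := hω
        simp [hfdef, hω']
      rw [setIntegral_congr_fun (measurableSet_Neq hN n) hEq, setIntegral_const, measureReal_def, hNlaw n,
        ENNReal.toReal_ofReal (by positivity), smul_eq_mul]
      have h3 : Real.exp (c * (2*l/5 - (n:ℝ)))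
          = Real.exp (c * (2*l/5)) * (2/5)^n := by
        rw [mul_sub, sub_eq_add_neg, Real.exp_add]
        congr 1
        rw [show -(c*(n:ℝ)) = (n:ℕ) * (-c) by push_cast; ring, Real.exp_nat_mul,
          Real.exp_neg, hcexp]
        norm_num
      rw [h3]
      have h5 : (2*l/5)^n = l^n * (2/5)^n := by
        rw [← mul_pow]
        congr 1
        ring
      rw [h5]
      field_simp
    rw [tsum_congr hterm, tsum_mul_left, tsum_pow_div_fact]
  refine le_trans hmono (le_trans (le_of_eq hval) ?_)
  rw [← Real.exp_add, ← Real.exp_add]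
  apply Real.exp_le_exp.2
  have : c * (2*l/5) ≤ (11/12) * (2*l/5) := by
    apply mul_le_mul_of_nonneg_right hc1112
    positivity
  nlinarith

lemma sum_fact_binom (x : ℝ) (hx : 0 ≤ x) (k : ℕ) :
    ∑ j ∈ Finset.range (k+1), (j.factorial : ℝ) * x^(k-j) * (k.choose j)
      ≤ (k.factorial : ℝ) * Real.exp x := by
  have h1 : ∑ j ∈ Finset.range (k+1), (j.factorial : ℝ) * x^(k-j) * (k.choose j)
      = ∑ j ∈ Finset.range (k+1), (k.factorial : ℝ) * (x^(k-j) / ((k-j).factorial : ℝ)) := by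
    refine Finset.sum_congr rfl fun j hj => ?_
    have hjk : j ≤ k := Nat.lt_succ_iff.1 (Finset.mem_range.1 hj)
    have h2 := Nat.choose_mul_factorial_mul_factorial hjk
    have h3 : ((k.choose j : ℕ) : ℝ) * (j.factorial : ℝ) * ((k-j).factorial : ℝ)
        = (k.factorial : ℝ) := by exact_mod_cast congrArg (Nat.cast (R := ℝ)) h2
    have h4 : ((k-j).factorial : ℝ) ≠ 0 := by positivity
    field_simp
    linear_combination x^(k-j) * h3
  rw [h1, ← Finset.mul_sum]
  have h5 : ∑ j ∈ Finset.range (k+1), x^(k-j)/(((k-j).factorial : ℕ) : ℝ)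
      = ∑ m ∈ Finset.range (k+1), x^m/((m.factorial : ℕ) : ℝ) := by
    rw [← Finset.sum_range_reflect (fun m => x^m/((m.factorial : ℕ) : ℝ)) (k+1)]
    refine Finset.sum_congr rfl fun j hj => ?_
    simp
  rw [h5]
  exact mul_le_mul_of_nonneg_left (Real.sum_le_exp_of_nonneg hx (k+1)) (by positivity)

end Stmt12
end Part5
section Part6
set_option linter.unusedSectionVars false
set_option maxHeartbeats 4000000

open Stmt12 in
/-- With `ξ_λ = (1 + 1/N_λ) Z_λ` for `N_λ > 0` and `ξ_λ = 0`
for `N_λ = 0`, there exists `λ₀ > 0` such that for all `λ ≥ λ₀` and every integer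
`ℓ ≥ 2`, `E(|ξ_λ − E(ξ_λ)|^ℓ) ≤ 6^ℓ ℓ!`. -/
theorem stmt12
    {Ω : Type*} [MeasurableSpace Ω] (P : Measure Ω) [IsProbabilityMeasure P]
    (N : ℝ → Ω → ℕ) (U : ℝ → ℕ → Ω → ℝ)
    (hNmeas : ∀ l : ℝ, 0 < l → Measurable (N l))
    (hUmeas : ∀ l : ℝ, 0 < l → ∀ i, Measurable (U l i))
    (hNlaw : ∀ l : ℝ, 0 < l → ∀ q : ℕ,
      P {ω | N l ω = q} = ENNReal.ofReal (Real.exp (-l) * l ^ q / q.factorial))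
    (hUlaw : ∀ l : ℝ, 0 < l → ∀ i,
      P.map (U l i) = ENNReal.ofReal (1 / l) • volume.restrict (Set.Icc 0 l))
    (hindep : ∀ l : ℝ, 0 < l →
      iIndepFun (β := fun o : Option ℕ => Option.rec ℕ (fun _ => ℝ) o)
      (m := fun o => Option.rec (motive := fun o => MeasurableSpace (Option.rec ℕ (fun _ => ℝ) o))
        (inferInstanceAs (MeasurableSpace ℕ)) (fun _ => inferInstanceAs (MeasurableSpace ℝ)) o)
      (fun o => Option.rec (motive := fun o => Ω → Option.rec ℕ (fun _ => ℝ) o)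
        (N l) (fun i => U l i) o) P)
    :
    ∃ lam₀ > (0 : ℝ), ∀ l : ℝ, lam₀ ≤ l → ∀ ℓ : ℕ, 2 ≤ ℓ →
      ∫ ω, |(if N l ω = 0 then (0 : ℝ) else (1 + 1 / (N l ω : ℝ)) * Zmax (N l) (U l) ω)
          - ∫ ω', (if N l ω' = 0 then (0 : ℝ)
              else (1 + 1 / (N l ω' : ℝ)) * Zmax (N l) (U l) ω') ∂P| ^ ℓ ∂P
        ≤ 6 ^ ℓ * (ℓ.factorial : ℝ) := by
  refine ⟨100, by norm_num, fun l hl100 ℓ hℓ => ?_⟩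
  have hl : (0:ℝ) < l := by linarith
  have hNm := hNmeas l hl
  have hUm := hUmeas l hl
  have hNl := hNlaw l hl
  have hUl := hUlaw l hl
  have hin := hindep l hl
  set Z : Ω → ℝ := Zmax (N l) (U l) with hZdef
  set ξ : Ω → ℝ := fun ω => if N l ω = 0 then (0:ℝ) else (1 + 1/(N l ω : ℝ)) * Z ω
    with hxidef
  have hZm : Measurable Z := measurable_Zmax hNm hUm
  have hZae : ∀ᵐ ω ∂P, Z ω ∈ Set.Icc 0 l := Z_mem_ae hl hUm hUl
  have hxim : Measurable ξ := by
    refine Measurable.ite (hNm (MeasurableSet.singleton 0)) measurable_const ?_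
    exact ((measurable_from_top (f := fun n : ℕ => 1 + 1/(n:ℝ))).comp hNm).mul hZm
  -- pointwise facts
  have hxifacts : ∀ᵐ ω ∂P, 0 ≤ ξ ω ∧ ξ ω ≤ 2*l := by
    filter_upwards [hZae] with ω h
    simp only [hxidef]
    split_ifs with h0
    · constructor <;> linarith
    · have hn1 : 1 ≤ N l ω := Nat.one_le_iff_ne_zero.2 h0
      have hc : (1:ℝ) ≤ (N l ω : ℝ) := by exact_mod_cast hn1
      have hpos : (0:ℝ) ≤ (1 + 1/(N l ω:ℝ)) := by positivity
      have h2 : (1 + 1/(N l ω:ℝ)) ≤ 2 := by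
        have h3 : 1/(N l ω:ℝ) ≤ 1 := by
          rw [div_le_one (by linarith)]
          exact hc
        linarith
      constructor
      · exact mul_nonneg hpos h.1
      · calc (1 + 1/(N l ω:ℝ)) * Z ω ≤ 2 * Z ω := mul_le_mul_of_nonneg_right h2 h.1
          _ ≤ 2 * l := by linarith [h.2]
  -- expectation of ξ
  have hEξ : ∫ ω, ξ ω ∂P = l * (1 - Real.exp (-l)) := integral_xi hl hNm hUm hNl hUl hin
  set δ : ℝ := l * Real.exp (-l) with hδdef
  have hδ0 : 0 ≤ δ := by positivity
  have hδsmall : δ ≤ 1/100 := by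
    have h1 : l^3 / 6 ≤ Real.exp l := by
      simpa [Nat.factorial] using Real.pow_div_factorial_le_exp l hl.le 3
    have hsq : (10000:ℝ) ≤ l^2 := by nlinarith
    have hcube : 10000 * l ≤ l^3 := by nlinarith
    have h3 : 100 * l ≤ Real.exp l := by linarith
    rw [hδdef, Real.exp_neg]
    rw [mul_inv_le_iff₀ (Real.exp_pos l)]
    linarith
  have hEδ : ∫ ω, ξ ω ∂P = l - δ := by
    rw [hEξ, hδdef]
    ring
  -- Chernoff
  set q : ℝ := (P {ω | ((N l) ω : ℝ) < 2*l/5}).toReal with hqdef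
  have hq0 : 0 ≤ q := ENNReal.toReal_nonneg
  have hqbound : q ≤ Real.exp (11*l/30 - 3*l/5) := chernoff hl hNm hNl
  -- moments of l - Z
  have hA : ∀ j : ℕ, ∫ ω, (l - Z ω)^j ∂P ≤ (j.factorial : ℝ) := by
    intro j
    rcases Nat.eq_zero_or_pos j with hj | hj
    · subst hj
      simp
    · exact momY hl hNm hUm hNl hUl hin j hj
  have hYm : Measurable fun ω => l - Z ω := measurable_const.sub hZm
  have hintY : ∀ j : ℕ, Integrable (fun ω => (l - Z ω)^j) P := fun j =>
    integrable_bdd (hYm.pow_const j) (C := l^j) (hZae.mono fun ω h => by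
      rw [abs_of_nonneg (pow_nonneg (sub_nonneg.2 h.2) j)]
      exact pow_le_pow_left₀ (sub_nonneg.2 h.2) (by linarith [h.1]) j)
  set G : Set Ω := {ω | ((N l) ω : ℝ) < 2*l/5} with hGdef
  have hGm : MeasurableSet G := measurableSet_lt (measurable_from_top.comp hNm) measurable_const
  have hxik_int : ∀ k : ℕ, Integrable (fun ω => |ξ ω - l|^k) P := fun k =>
    integrable_bdd ((hxim.sub measurable_const).abs.pow_const k) (C := l^k)
      (hxifacts.mono fun ω h => by
        rw [abs_of_nonneg (pow_nonneg (abs_nonneg _) k)]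
        refine pow_le_pow_left₀ (abs_nonneg _) ?_ k
        rw [abs_le]
        constructor <;> linarith [h.1, h.2])
  -- the k-th moment bound
  have hI : ∀ k : ℕ, ∫ ω, |ξ ω - l|^k ∂P ≤ Real.exp (5/2) * k.factorial + l^k * q := by
    intro k
    have hpt : ∀ᵐ ω ∂P, |ξ ω - l|^k
        ≤ ((l - Z ω) + 5/2)^k + Set.indicator G (fun _ => l^k) ω := by
      filter_upwards [hZae, hxifacts] with ω hZω hξω
      by_cases hGω : ω ∈ G
      · rw [Set.indicator_of_mem hGω]
        have h1 : |ξ ω - l| ≤ l := by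
          rw [abs_le]
          constructor <;> linarith [hξω.1, hξω.2]
        have h2 : |ξ ω - l|^k ≤ l^k := pow_le_pow_left₀ (abs_nonneg _) h1 k
        have h3 : (0:ℝ) ≤ ((l - Z ω) + 5/2)^k :=
          pow_nonneg (by linarith [sub_nonneg.2 hZω.2]) k
        linarith
      · rw [Set.indicator_of_notMem hGω, add_zero]
        have hNge : 2*l/5 ≤ ((N l) ω : ℝ) := not_lt.1 hGω
        have hNpos : N l ω ≠ 0 := by
          intro h0
          rw [h0] at hNge
          simp at hNge
          linarith
        have hcast : (0:ℝ) < (N l ω : ℝ) := by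
          have : 1 ≤ N l ω := Nat.one_le_iff_ne_zero.2 hNpos
          exact_mod_cast this
        have hxieq : ξ ω = Z ω + Z ω / (N l ω : ℝ) := by
          simp only [hxidef, if_neg hNpos]
          field_simp
        have hZN : Z ω / (N l ω : ℝ) ≤ 5/2 := by
          rw [div_le_iff₀ hcast]
          nlinarith [hZω.2, hNge]
        have hZN0 : 0 ≤ Z ω / (N l ω : ℝ) := div_nonneg hZω.1 hcast.le
        have hlZ : 0 ≤ l - Z ω := sub_nonneg.2 hZω.2
        have habs : |ξ ω - l| ≤ (l - Z ω) + 5/2 := by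
          rw [abs_le]
          constructor
          · rw [hxieq]; linarith
          · rw [hxieq]; linarith
        exact pow_le_pow_left₀ (abs_nonneg _) habs k
    have hgoodint : Integrable (fun ω => ((l - Z ω) + 5/2)^k) P :=
      integrable_bdd ((hYm.add_const (5/2)).pow_const k) (C := (l + 5/2)^k)
        (hZae.mono fun ω h => by
          rw [abs_of_nonneg (pow_nonneg (by linarith [sub_nonneg.2 h.2]) k)]
          exact pow_le_pow_left₀ (by linarith [sub_nonneg.2 h.2]) (by linarith [h.1]) k)
    have hbadint : Integrable (fun ω => Set.indicator G (fun _ => l^k) ω) P :=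
      (integrable_const (l^k)).indicator hGm
    have step1 : ∫ ω, |ξ ω - l|^k ∂P
        ≤ ∫ ω, (((l - Z ω) + 5/2)^k + Set.indicator G (fun _ => l^k) ω) ∂P :=
      integral_mono_ae (hxik_int k) (hgoodint.add hbadint) hpt
    have step2 : ∫ ω, (((l - Z ω) + 5/2)^k + Set.indicator G (fun _ => l^k) ω) ∂P
        = ∫ ω, ((l - Z ω) + 5/2)^k ∂P + l^k * q := by
      rw [integral_add hgoodint hbadint, integral_indicator hGm, setIntegral_const,
        smul_eq_mul, hqdef, measureReal_def]
      ring
    have step3 : ∫ ω, ((l - Z ω) + 5/2)^k ∂P ≤ Real.exp (5/2) * k.factorial := by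
      have hexpand : ∀ ω, ((l - Z ω) + 5/2)^k
          = ∑ j ∈ Finset.range (k+1), (l - Z ω)^j * (5/2:ℝ)^(k-j) * (k.choose j) :=
        fun ω => add_pow _ _ _
      rw [integral_congr_ae (Filter.Eventually.of_forall hexpand)]
      rw [integral_finset_sum _ (fun j _ => ((hintY j).mul_const _).mul_const _)]
      have step4 : ∀ j ∈ Finset.range (k+1),
          ∫ ω, (l - Z ω)^j * (5/2:ℝ)^(k-j) * (k.choose j) ∂P
            ≤ (j.factorial : ℝ) * (5/2:ℝ)^(k-j) * (k.choose j) := by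
        intro j _
        have h6 : ∫ ω, (l - Z ω)^j * (5/2:ℝ)^(k-j) * (k.choose j) ∂P
            = (∫ ω, (l - Z ω)^j ∂P) * ((5/2:ℝ)^(k-j) * (k.choose j)) := by
          rw [← integral_mul_const]
          congr 1
          funext ω
          ring
        rw [h6]
        have h7 : (0:ℝ) ≤ (5/2:ℝ)^(k-j) * (k.choose j) := by positivity
        calc (∫ ω, (l - Z ω)^j ∂P) * ((5/2:ℝ)^(k-j) * (k.choose j))
            ≤ (j.factorial : ℝ) * ((5/2:ℝ)^(k-j) * (k.choose j)) :=
              mul_le_mul_of_nonneg_right (hA j) h7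
          _ = (j.factorial : ℝ) * (5/2:ℝ)^(k-j) * (k.choose j) := by ring
      calc ∑ j ∈ Finset.range (k+1), ∫ ω, (l - Z ω)^j * (5/2:ℝ)^(k-j) * (k.choose j) ∂P
          ≤ ∑ j ∈ Finset.range (k+1), (j.factorial : ℝ) * (5/2:ℝ)^(k-j) * (k.choose j) :=
            Finset.sum_le_sum step4
        _ ≤ (k.factorial : ℝ) * Real.exp (5/2) := sum_fact_binom (5/2) (by norm_num) k
        _ = Real.exp (5/2) * k.factorial := by ring
    rw [step2] at step1
    linarith [step3]
  -- final assembly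
  rw [hEδ]
  have hmain : ∫ ω, |ξ ω - (l - δ)|^ℓ ∂P
      ≤ Real.exp (5/2) * Real.exp δ * ℓ.factorial + (l + δ)^ℓ * q := by
    have hptf : ∀ᵐ ω ∂P, |ξ ω - (l - δ)|^ℓ
        ≤ ∑ k ∈ Finset.range (ℓ+1), |ξ ω - l|^k * δ^(ℓ-k) * (ℓ.choose k) := by
      refine Filter.Eventually.of_forall fun ω => ?_
      have h1 : |ξ ω - (l - δ)| ≤ |ξ ω - l| + δ := by
        have h2 : ξ ω - (l - δ) = (ξ ω - l) + δ := by ring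
        rw [h2]
        refine (abs_add_le _ _).trans ?_
        rw [abs_of_nonneg hδ0]
      calc |ξ ω - (l-δ)|^ℓ ≤ (|ξ ω - l| + δ)^ℓ := pow_le_pow_left₀ (abs_nonneg _) h1 ℓ
        _ = ∑ k ∈ Finset.range (ℓ+1), |ξ ω - l|^k * δ^(ℓ-k) * (ℓ.choose k) := add_pow _ _ _
    have hsumint : Integrable
        (fun ω => ∑ k ∈ Finset.range (ℓ+1), |ξ ω - l|^k * δ^(ℓ-k) * (ℓ.choose k)) P :=
      integrable_finset_sum _ (fun k _ => ((hxik_int k).mul_const _).mul_const _)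
    have hLint : Integrable (fun ω => |ξ ω - (l - δ)|^ℓ) P :=
      integrable_bdd ((hxim.sub measurable_const).abs.pow_const ℓ) (C := (l+δ)^ℓ)
        (hxifacts.mono fun ω h => by
          rw [abs_of_nonneg (pow_nonneg (abs_nonneg _) ℓ)]
          refine pow_le_pow_left₀ (abs_nonneg _) ?_ ℓ
          rw [abs_le]
          constructor <;> linarith [h.1, h.2])
    have hstep1 : ∫ ω, |ξ ω - (l - δ)|^ℓ ∂P
        ≤ ∑ k ∈ Finset.range (ℓ+1), (∫ ω, |ξ ω - l|^k ∂P) * δ^(ℓ-k) * (ℓ.choose k) := by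
      refine le_trans (integral_mono_ae hLint hsumint hptf) ?_
      rw [integral_finset_sum _ (fun k _ => ((hxik_int k).mul_const _).mul_const _)]
      refine le_of_eq (Finset.sum_congr rfl fun k _ => ?_)
      calc ∫ ω, |ξ ω - l|^k * δ^(ℓ-k) * (ℓ.choose k) ∂P
          = ∫ ω, |ξ ω - l|^k * (δ^(ℓ-k) * (ℓ.choose k)) ∂P :=
            integral_congr_ae (Filter.Eventually.of_forall fun ω => by ring)
        _ = (∫ ω, |ξ ω - l|^k ∂P) * (δ^(ℓ-k) * (ℓ.choose k)) := integral_mul_const _ _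
        _ = (∫ ω, |ξ ω - l|^k ∂P) * δ^(ℓ-k) * (ℓ.choose k) := by ring
    have hstep2 : ∑ k ∈ Finset.range (ℓ+1), (∫ ω, |ξ ω - l|^k ∂P) * δ^(ℓ-k) * (ℓ.choose k)
        ≤ ∑ k ∈ Finset.range (ℓ+1),
            (Real.exp (5/2) * k.factorial + l^k * q) * δ^(ℓ-k) * (ℓ.choose k) := by
      refine Finset.sum_le_sum fun k _ => ?_
      have h7 : (0:ℝ) ≤ δ^(ℓ-k) * (ℓ.choose k) := by positivity
      calc (∫ ω, |ξ ω - l|^k ∂P) * δ^(ℓ-k) * (ℓ.choose k)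
          = (∫ ω, |ξ ω - l|^k ∂P) * (δ^(ℓ-k) * (ℓ.choose k)) := by ring
        _ ≤ (Real.exp (5/2) * k.factorial + l^k * q) * (δ^(ℓ-k) * (ℓ.choose k)) :=
            mul_le_mul_of_nonneg_right (hI k) h7
        _ = (Real.exp (5/2) * k.factorial + l^k * q) * δ^(ℓ-k) * (ℓ.choose k) := by ring
    have hsplit : ∑ k ∈ Finset.range (ℓ+1),
        (Real.exp (5/2) * (k.factorial:ℝ) + l^k * q) * δ^(ℓ-k) * (ℓ.choose k)
        = Real.exp (5/2)
            * (∑ k ∈ Finset.range (ℓ+1), (k.factorial : ℝ) * δ^(ℓ-k) * (ℓ.choose k))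
          + q * (∑ k ∈ Finset.range (ℓ+1), l^k * δ^(ℓ-k) * (ℓ.choose k)) := by
      rw [Finset.mul_sum, Finset.mul_sum, ← Finset.sum_add_distrib]
      refine Finset.sum_congr rfl fun k _ => by ring
    have hbinom : ∑ k ∈ Finset.range (ℓ+1), l^k * δ^(ℓ-k) * ((ℓ.choose k):ℝ) = (l + δ)^ℓ :=
      (add_pow l δ ℓ).symm
    have hfactsum : ∑ k ∈ Finset.range (ℓ+1), (k.factorial : ℝ) * δ^(ℓ-k) * (ℓ.choose k)
        ≤ (ℓ.factorial : ℝ) * Real.exp δ := sum_fact_binom δ hδ0 ℓ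
    calc ∫ ω, |ξ ω - (l - δ)|^ℓ ∂P
        ≤ ∑ k ∈ Finset.range (ℓ+1), (∫ ω, |ξ ω - l|^k ∂P) * δ^(ℓ-k) * (ℓ.choose k) := hstep1
      _ ≤ ∑ k ∈ Finset.range (ℓ+1),
            (Real.exp (5/2) * k.factorial + l^k * q) * δ^(ℓ-k) * (ℓ.choose k) := hstep2
      _ = Real.exp (5/2)
            * (∑ k ∈ Finset.range (ℓ+1), (k.factorial : ℝ) * δ^(ℓ-k) * (ℓ.choose k))
          + q * (∑ k ∈ Finset.range (ℓ+1), l^k * δ^(ℓ-k) * (ℓ.choose k)) := hsplit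
      _ ≤ Real.exp (5/2) * ((ℓ.factorial : ℝ) * Real.exp δ) + q * (l + δ)^ℓ := by
          rw [hbinom]
          exact add_le_add (mul_le_mul_of_nonneg_left hfactsum (Real.exp_pos _).le)
            (le_refl _)
      _ = Real.exp (5/2) * Real.exp δ * ℓ.factorial + (l + δ)^ℓ * q := by ring
  refine le_trans hmain ?_
  have hfac1 : (1:ℝ) ≤ ℓ.factorial := by exact_mod_cast ℓ.factorial_pos
  have h6pow : (36:ℝ) ≤ 6^ℓ := by
    calc (36:ℝ) = 6^2 := by norm_num
      _ ≤ 6^ℓ := pow_le_pow_right₀ (by norm_num) hℓ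
  have e1 : Real.exp (5/2) * Real.exp δ ≤ 20.1 := by
    rw [← Real.exp_add]
    have h8 : (5:ℝ)/2 + δ ≤ 3 := by linarith
    refine le_trans (Real.exp_le_exp.2 h8) ?_
    have h9 : Real.exp 3 = Real.exp 1 ^ (3:ℕ) := by
      rw [← Real.exp_nat_mul]
      norm_num
    rw [h9]
    calc Real.exp 1 ^ (3:ℕ) ≤ (2.7182818286:ℝ)^(3:ℕ) :=
        pow_le_pow_left₀ (Real.exp_pos 1).le Real.exp_one_lt_d9.le 3
      _ ≤ 20.1 := by norm_num
  have e2 : (l + δ)^ℓ * q ≤ Real.exp (-1) * (6^ℓ * ℓ.factorial) := by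
    have h13 : (0:ℝ) < ℓ.factorial := by exact_mod_cast ℓ.factorial_pos
    have h11 : ((l+δ)/6)^ℓ ≤ Real.exp ((l+δ)/6) * ℓ.factorial := by
      have h12 := Real.pow_div_factorial_le_exp ((l+δ)/6) (by positivity) ℓ
      rw [div_le_iff₀ h13] at h12
      exact h12
    have h14 : (l+δ)^ℓ ≤ 6^ℓ * ℓ.factorial * Real.exp ((l+δ)/6) := by
      rw [div_pow] at h11
      have h16 : (0:ℝ) < 6^ℓ := by positivity
      rw [div_le_iff₀ h16] at h11
      calc (l+δ)^ℓ ≤ Real.exp ((l+δ)/6) * ℓ.factorial * 6^ℓ := h11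
        _ = 6^ℓ * ℓ.factorial * Real.exp ((l+δ)/6) := by ring
    calc (l+δ)^ℓ * q
        ≤ (6^ℓ * ℓ.factorial * Real.exp ((l+δ)/6)) * Real.exp (11*l/30 - 3*l/5) :=
          mul_le_mul h14 hqbound hq0 (by positivity)
      _ = 6^ℓ * ℓ.factorial * Real.exp ((l+δ)/6 + (11*l/30 - 3*l/5)) := by
          rw [Real.exp_add]
          ring
      _ ≤ 6^ℓ * ℓ.factorial * Real.exp (-1) := by
          refine mul_le_mul_of_nonneg_left (Real.exp_le_exp.2 ?_) (by positivity)
          linarith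
      _ = Real.exp (-1) * (6^ℓ * ℓ.factorial) := by ring
  have e3 : Real.exp (-1:ℝ) ≤ 0.4 := by
    have h17 : (2.5:ℝ) ≤ Real.exp 1 := by
      have := Real.exp_one_gt_d9
      linarith
    have h18 : Real.exp (-1:ℝ) = (Real.exp 1)⁻¹ := by rw [Real.exp_neg]
    rw [h18, show (0.4:ℝ) = (2.5:ℝ)⁻¹ by norm_num]
    exact inv_anti₀ (by norm_num) h17
  have hfqb : (l + δ)^ℓ * q ≤ 0.4 * (6^ℓ * ℓ.factorial) :=
    le_trans e2 (mul_le_mul_of_nonneg_right e3 (by positivity))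
  have hterm1 : Real.exp (5/2) * Real.exp δ * ℓ.factorial ≤ 20.1 * ℓ.factorial :=
    mul_le_mul_of_nonneg_right e1 (by positivity)
  have h36 : (36:ℝ) * ℓ.factorial ≤ 6^ℓ * ℓ.factorial :=
    mul_le_mul_of_nonneg_right h6pow (by positivity)
  linarith [hterm1, hfqb, h36, hfac1]

end Part6
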